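/- Let (A, E, s) be a weakly idempotent complete extriangulated category. Then any extriangle of the form A → B1 ⊕ B2 →(g1⊕g2) C1 ⊕ C2 ⇢δ, whose deflation is a diagonal matrix diag(g1, g2), is isomorphic to the direct sum of two extriangles ⟨A1 →f1 B1 →g1 C1, δ1⟩ ⊕ ⟨A2 →f2 B2 →g2 C2, δ2⟩. -/

import Mathlib

/-!
Common axiomatic framework: extriangulated categories in the sense of Nakaoka–Palu,
formalised as a biadditive functor `E` together with a realisation predicate
`IsExtriangle` subject to the axioms (ET1)–(ET4), (ET3)ᵒᵖ, (ET4)ᵒᵖ.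
-/

open CategoryTheory CategoryTheory.Limits ZeroObject

attribute [local instance] CategoryTheory.Limits.hasBinaryBiproducts_of_finite_biproducts

universe v u

namespace ExtriPaper

/-- The data underlying an extriangulated category: a biadditive functor `E` and,
for each extension `δ ∈ E(X, A)`, the predicate picking out the pairs of composable
morphisms `A ⟶ B ⟶ X` belonging to the equivalence class `s(δ)`. -/
structure PreExt (C : Type u) [Category.{v} C] [Preadditive C] where
  E : Cᵒᵖ ⥤ C ⥤ AddCommGrpCat.{v}
  IsExtriangle : ∀ {A B X : C}, (A ⟶ B) → (B ⟶ X) → ↥((E.obj (Opposite.op X)).obj A) → Prop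

namespace PreExt

variable {C : Type u} [Category.{v} C] [Preadditive C]
variable (S : PreExt C)

/-- The group `E(X, A)` of extensions of `X` by `A`. -/
abbrev Ext (X A : C) : Type v := ↥((S.E.obj (Opposite.op X)).obj A)

/-- Pushforward `a_* δ` of an extension along `a : A ⟶ A'`. -/
def push {X A A' : C} (a : A ⟶ A') (δ : S.Ext X A) : S.Ext X A' :=
  (S.E.obj (Opposite.op X)).map a δ

/-- Pullback `c^* δ` of an extension along `c : X' ⟶ X`. -/
def pull {X' X A : C} (c : X' ⟶ X) (δ : S.Ext X A) : S.Ext X' A :=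
  (S.E.map c.op).app A δ

section Axioms

variable [HasZeroObject C] [HasFiniteBiproducts C]

/-- The direct sum `δ ⊕ δ'` of two extensions. -/
noncomputable def sumExt {X X' A A' : C} (δ : S.Ext X A) (δ' : S.Ext X' A') :
    S.Ext (X ⊞ X') (A ⊞ A') :=
  S.push biprod.inl (S.pull biprod.fst δ) + S.push biprod.inr (S.pull biprod.snd δ')

/-- The axioms of an extriangulated category (Nakaoka–Palu): `E` is biadditive,
`s` (encoded by `IsExtriangle`) is an additive realisation defined on equivalence
classes, and the axioms (ET3), (ET3)ᵒᵖ, (ET4), (ET4)ᵒᵖ hold. -/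
structure IsET : Prop where
  /-- Biadditivity of `E` in the covariant variable. -/
  push_add : ∀ {X A A' : C} (a b : A ⟶ A') (δ : S.Ext X A),
      S.push (a + b) δ = S.push a δ + S.push b δ
  /-- Biadditivity of `E` in the contravariant variable. -/
  pull_add : ∀ {X X' A : C} (c d : X' ⟶ X) (δ : S.Ext X A),
      S.pull (c + d) δ = S.pull c δ + S.pull d δ
  /-- Every extension is realised by a pair of composable morphisms. -/
  realize_exists : ∀ {A X : C} (δ : S.Ext X A),
      ∃ (B : C) (f : A ⟶ B) (g : B ⟶ X), S.IsExtriangle f g δ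
  /-- The realisation is closed under equivalence of pairs of composable morphisms. -/
  realize_iso : ∀ {A B B' X : C} {f : A ⟶ B} {g : B ⟶ X} {δ : S.Ext X A} (e : B ≅ B'),
      S.IsExtriangle f g δ → S.IsExtriangle (f ≫ e.hom) (e.inv ≫ g) δ
  /-- Any two realisations of the same extension are equivalent. -/
  realize_unique : ∀ {A B B' X : C} {f : A ⟶ B} {g : B ⟶ X} {f' : A ⟶ B'} {g' : B' ⟶ X}
      {δ : S.Ext X A}, S.IsExtriangle f g δ → S.IsExtriangle f' g' δ →
      ∃ e : B ≅ B', f ≫ e.hom = f' ∧ e.hom ≫ g' = g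
  /-- Morphisms of extensions lift to morphisms of extriangles. -/
  realize_map : ∀ {A B X A' B' X' : C} {f : A ⟶ B} {g : B ⟶ X} {δ : S.Ext X A}
      {f' : A' ⟶ B'} {g' : B' ⟶ X'} {δ' : S.Ext X' A'},
      S.IsExtriangle f g δ → S.IsExtriangle f' g' δ' →
      ∀ (a : A ⟶ A') (c : X ⟶ X'), S.push a δ = S.pull c δ' →
      ∃ b : B ⟶ B', f ≫ b = a ≫ f' ∧ b ≫ g' = g ≫ c
  /-- The zero extension is realised by the split pair. -/
  realize_zero : ∀ (A X : C),
      S.IsExtriangle (biprod.inl : A ⟶ A ⊞ X) (biprod.snd : A ⊞ X ⟶ X) (0 : S.Ext X A)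
  /-- The realisation is additive. -/
  realize_sum : ∀ {A B X A' B' X' : C} {f : A ⟶ B} {g : B ⟶ X} {δ : S.Ext X A}
      {f' : A' ⟶ B'} {g' : B' ⟶ X'} {δ' : S.Ext X' A'},
      S.IsExtriangle f g δ → S.IsExtriangle f' g' δ' →
      S.IsExtriangle (biprod.map f f') (biprod.map g g') (S.sumExt δ δ')
  /-- Axiom (ET3). -/
  et3 : ∀ {A B X A' B' X' : C} {f : A ⟶ B} {g : B ⟶ X} {δ : S.Ext X A}
      {f' : A' ⟶ B'} {g' : B' ⟶ X'} {δ' : S.Ext X' A'},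
      S.IsExtriangle f g δ → S.IsExtriangle f' g' δ' →
      ∀ (a : A ⟶ A') (b : B ⟶ B'), f ≫ b = a ≫ f' →
      ∃ c : X ⟶ X', g ≫ c = b ≫ g' ∧ S.push a δ = S.pull c δ'
  /-- Axiom (ET3)ᵒᵖ. -/
  et3op : ∀ {A B X A' B' X' : C} {f : A ⟶ B} {g : B ⟶ X} {δ : S.Ext X A}
      {f' : A' ⟶ B'} {g' : B' ⟶ X'} {δ' : S.Ext X' A'},
      S.IsExtriangle f g δ → S.IsExtriangle f' g' δ' →
      ∀ (b : B ⟶ B') (c : X ⟶ X'), g ≫ c = b ≫ g' →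
      ∃ a : A ⟶ A', f ≫ b = a ≫ f' ∧ S.push a δ = S.pull c δ'
  /-- Axiom (ET4). -/
  et4 : ∀ {A B D F G : C} {f : A ⟶ B} {f' : B ⟶ D} {δ : S.Ext D A}
      {g : B ⟶ G} {g' : G ⟶ F} {δ' : S.Ext F B},
      S.IsExtriangle f f' δ → S.IsExtriangle g g' δ' →
      ∃ (E₀ : C) (h : G ⟶ E₀) (d : D ⟶ E₀) (e : E₀ ⟶ F) (δ'' : S.Ext E₀ A),
        S.IsExtriangle (f ≫ g) h δ'' ∧
        S.IsExtriangle d e (S.push f' δ') ∧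
        S.pull d δ'' = δ ∧
        S.push f δ'' = S.pull e δ' ∧
        f' ≫ d = g ≫ h ∧ h ≫ e = g'
  /-- Axiom (ET4)ᵒᵖ. -/
  et4op : ∀ {D B A F G : C} {p : D ⟶ B} {f₁ : B ⟶ A} {δ₁ : S.Ext A D}
      {q : F ⟶ G} {g₁ : G ⟶ B} {δ₁' : S.Ext B F},
      S.IsExtriangle p f₁ δ₁ → S.IsExtriangle q g₁ δ₁' →
      ∃ (E₀ : C) (h : E₀ ⟶ G) (d : E₀ ⟶ D) (e : F ⟶ E₀) (δ'' : S.Ext A E₀),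
        S.IsExtriangle h (g₁ ≫ f₁) δ'' ∧
        S.IsExtriangle e d (S.pull p δ₁') ∧
        S.push d δ'' = δ₁ ∧
        S.pull f₁ δ'' = S.push e δ₁' ∧
        d ≫ p = h ≫ g₁ ∧ e ≫ h = q

end Axioms

/-- A morphism is an inflation if it occurs as the first morphism of an extriangle. -/
def IsInflation {A B : C} (f : A ⟶ B) : Prop :=
  ∃ (X : C) (g : B ⟶ X) (δ : S.Ext X A), S.IsExtriangle f g δ

/-- A morphism is a deflation if it occurs as the second morphism of an extriangle. -/
def IsDeflation {B X : C} (g : B ⟶ X) : Prop :=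
  ∃ (A : C) (f : A ⟶ B) (δ : S.Ext X A), S.IsExtriangle f g δ

/-- An isomorphism of extriangles: a triple of isomorphisms compatible with the
structure morphisms and identifying the two extensions. -/
def TriIso {A B X A' B' X' : C} (f : A ⟶ B) (g : B ⟶ X) (δ : S.Ext X A)
    (f' : A' ⟶ B') (g' : B' ⟶ X') (δ' : S.Ext X' A') : Prop :=
  ∃ (iA : A ≅ A') (iB : B ≅ B') (iX : X ≅ X'),
    f ≫ iB.hom = iA.hom ≫ f' ∧ g ≫ iX.hom = iB.hom ≫ g' ∧
    S.push iA.hom δ = S.pull iX.hom δ'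

/-- A chain of `t` composable extriangles: inflations `obj i ⟶ obj (i+1)` each fitting
in an extriangle with cone `factor i`.  This underlies filtrations, inflation series
and composition series alike. -/
structure FChain (t : ℕ) where
  obj : Fin (t + 1) → C
  factor : Fin t → C
  f : ∀ i : Fin t, obj i.castSucc ⟶ obj i.succ
  g : ∀ i : Fin t, obj i.succ ⟶ factor i
  δ : ∀ i : Fin t, S.Ext (factor i) (obj i.castSucc)
  ext : ∀ i : Fin t, S.IsExtriangle (f i) (g i) (δ i)

/-- The composite `obj 0 ⟶ obj i` of the morphisms of a chain. -/
def FChain.comp {t : ℕ} (c : S.FChain t) : ∀ i : Fin (t + 1), c.obj 0 ⟶ c.obj i :=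
  Fin.induction (𝟙 _) (fun i ih => ih ≫ c.f i)

/-- The subcategory `F(P)` of objects admitting a filtration with factors in `P`. -/
def Filt (P : Set C) : Set C :=
  {M | ∃ (t : ℕ) (c : S.FChain t), IsZero (c.obj 0) ∧ c.obj (Fin.last t) = M ∧
      ∀ i, c.factor i ∈ P}

/-- An `(E, s)`-simple object: a non-zero object `M` such that in every extriangle
`A →a M → X ⇢` the inflation `a` is zero or an isomorphism. -/
def SSimple (M : C) : Prop :=
  ¬ IsZero M ∧ ∀ (A X : C) (a : A ⟶ M) (g : M ⟶ X) (δ : S.Ext X A),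
    S.IsExtriangle a g δ → a = 0 ∨ IsIso a

/-- The zero objects of `C` are `(E, s)`-simple-like. -/
def ZeroSimpleLike : Prop :=
  ∀ (A Z X : C) (f : A ⟶ Z) (g : Z ⟶ X) (δ : S.Ext X A),
    IsZero Z → S.IsExtriangle f g δ → IsZero A

/-- `c` is an `(E, s)`-composition series of `M`. -/
def IsCompSeries {t : ℕ} (c : S.FChain t) (M : C) : Prop :=
  IsZero (c.obj 0) ∧ c.obj (Fin.last t) = M ∧ ∀ i, S.SSimple (c.factor i)

/-- `(A, E, s)` is a length extriangulated category. -/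
def LengthCat : Prop :=
  ∀ M : C, (∃ (t : ℕ) (c : S.FChain t), S.IsCompSeries c M) ∧
    ∃ N : ℕ, ∀ (t : ℕ) (c : S.FChain t), S.IsCompSeries c M → t ≤ N

/-- `(A, E, s)` is a Jordan–Hölder extriangulated category: any two composition series
of an object have the same length and, up to a permutation, isomorphic simple factors. -/
def JordanHolder : Prop :=
  ∀ (M : C) (t t' : ℕ) (c : S.FChain t) (c' : S.FChain t'),
    S.IsCompSeries c M → S.IsCompSeries c' M →
    ∃ e : Fin t ≃ Fin t', ∀ i, Nonempty (c.factor i ≅ c'.factor (e i))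

/-- `c` is an `(E, s)`-inflation series of `B`: a filtration of `B` with non-zero factors. -/
def IsInflSeries {t : ℕ} (c : S.FChain t) (B : C) : Prop :=
  IsZero (c.obj 0) ∧ c.obj (Fin.last t) = B ∧ ∀ i, ¬ IsZero (c.factor i)

/-- `X` and `Y` admit isomorphic `(E, s)`-inflation series. -/
def HaveIsoInflSeries (X Y : C) : Prop :=
  ∃ (t : ℕ) (c d : S.FChain t), S.IsInflSeries c X ∧ S.IsInflSeries d Y ∧
    ∃ e : Equiv.Perm (Fin t), ∀ i, Nonempty (c.factor i ≅ d.factor (e i))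

/-- Simplicity of `M` with respect to the extriangulated structure restricted to the
extension-closed subcategory `𝒮`: extriangles of the restricted structure are exactly
the ambient extriangles all of whose terms lie in `𝒮`. -/
def SimpleIn (𝒮 : Set C) (M : C) : Prop :=
  M ∈ 𝒮 ∧ ¬ IsZero M ∧ ∀ (A X : C) (a : A ⟶ M) (g : M ⟶ X) (δ : S.Ext X A),
    A ∈ 𝒮 → X ∈ 𝒮 → S.IsExtriangle a g δ → a = 0 ∨ IsIso a

/-- `c` is a composition series of `M` in the extriangulated structure restricted to `𝒮`. -/
def IsCompSeriesIn (𝒮 : Set C) {t : ℕ} (c : S.FChain t) (M : C) : Prop :=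
  IsZero (c.obj 0) ∧ c.obj (Fin.last t) = M ∧ (∀ i, c.obj i ∈ 𝒮) ∧
    ∀ i, S.SimpleIn 𝒮 (c.factor i)

section Star

variable [HasZeroObject C] [HasFiniteBiproducts C]

/-- The subcategory `P ∗ Q` of objects `Z` admitting an extriangle `X → Z → Y ⇢`
with `X ∈ P` and `Y ∈ Q`. -/
def star (P Q : Set C) : Set C :=
  {Z | ∃ (X Y : C) (f : X ⟶ Z) (g : Z ⟶ Y) (δ : S.Ext Y X),
      X ∈ P ∧ Y ∈ Q ∧ S.IsExtriangle f g δ}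

/-- Iterated `∗` of a list of subcategories (the empty `∗` being the zero objects). -/
def starMany : List (Set C) → Set C
  | [] => {Z | IsZero Z}
  | P :: l => S.star P (starMany l)

end Star

/-- The relative projectives `P(P) = {Z : E(Z, Y) = 0 for all Y ∈ F(P)}`. -/
def projSet (P : Set C) : Set C :=
  {Z | ∀ Y ∈ S.Filt P, ∀ δ : S.Ext Z Y, δ = 0}

/-- `Hom(W, −)` is left exact on the extriangulated structure restricted to `𝒮`:
for every extriangle `A →a B → X ⇢` with all terms in `𝒮`, composition with `a`
is injective on morphisms from `W`. -/
def HomLeftExactOn (W : C) (𝒮 : Set C) : Prop :=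
  ∀ (A B X : C) (a : A ⟶ B) (g : B ⟶ X) (δ : S.Ext X A),
    A ∈ 𝒮 → B ∈ 𝒮 → X ∈ 𝒮 → S.IsExtriangle a g δ →
    ∀ φ ψ : W ⟶ A, φ ≫ a = ψ ≫ a → φ = ψ

/-- The subset of the free abelian group on objects consisting of the defining
relations of the Grothendieck group `K₀(A, E, s)`. -/
def K0Rels : Set (FreeAbelianGroup C) :=
  {x | ∃ (A B X : C) (f : A ⟶ B) (g : B ⟶ X) (δ : S.Ext X A), S.IsExtriangle f g δ ∧
      x = FreeAbelianGroup.of A + FreeAbelianGroup.of X - FreeAbelianGroup.of B} ∪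
  {x | ∃ (X Y : C) (_ : X ≅ Y), x = FreeAbelianGroup.of X - FreeAbelianGroup.of Y}

/-- `[M] = [M']` in the Grothendieck group `K₀(A, E, s)`, the quotient of the free
abelian group on (isomorphism classes of) objects by the extriangle relations. -/
def GrpRel (M M' : C) : Prop :=
  FreeAbelianGroup.of M - FreeAbelianGroup.of M' ∈ AddSubgroup.closure S.K0Rels

end PreExt

/-- The congruence defining the Grothendieck monoid: `MonRel S M M'` holds if and only
if `[M] = [M']` in the Grothendieck monoid `M(A, E, s)`, the quotient of the monoid of
isomorphism classes of objects (under `⊞`) by the congruence generated by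
`[B] ∼ [A] + [X]` for each extriangle `A → B → X ⇢`. -/
inductive MonRel {C : Type u} [Category.{v} C] [Preadditive C] [HasZeroObject C]
    [HasFiniteBiproducts C] (S : PreExt C) : C → C → Prop
  | of {A B X : C} {f : A ⟶ B} {g : B ⟶ X} {δ : S.Ext X A}
      (h : S.IsExtriangle f g δ) : MonRel S B (A ⊞ X)
  | iso {X Y : C} (e : X ≅ Y) : MonRel S X Y
  | symm {X Y : C} : MonRel S X Y → MonRel S Y X
  | trans {X Y Z : C} : MonRel S X Y → MonRel S Y Z → MonRel S X Z
  | add {X Y : C} (Z : C) : MonRel S X Y → MonRel S (X ⊞ Z) (Y ⊞ Z)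

/-- `[M]` is an atom of the Grothendieck monoid `M(A, E, s)`. -/
def IsAtomClass {C : Type u} [Category.{v} C] [Preadditive C] [HasZeroObject C]
    [HasFiniteBiproducts C] (S : PreExt C) (M : C) : Prop :=
  ¬ MonRel S M 0 ∧ ∀ X Y : C, MonRel S M (X ⊞ Y) → MonRel S X 0 ∨ MonRel S Y 0

/-- An additive category is weakly idempotent complete if every retraction admits a kernel. -/
def WeaklyIdemComplete (C : Type u) [Category.{v} C] [Preadditive C] : Prop :=
  ∀ (X Y : C) (r : X ⟶ Y), IsSplitEpi r → HasKernel r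

/-- A set of objects is closed under direct summands. -/
def ClosedSummands {C : Type u} [Category.{v} C] [Preadditive C] [HasZeroObject C]
    [HasFiniteBiproducts C] (P : Set C) : Prop :=
  ∀ (X Y Z : C), Z ∈ P → Nonempty (Z ≅ X ⊞ Y) → X ∈ P

/-- A Krull–Schmidt category: every object is a finite biproduct of objects having
local endomorphism rings. -/
def KrullSchmidtCat (C : Type u) [Category.{v} C] [Preadditive C] [HasZeroObject C]
    [HasFiniteBiproducts C] : Prop :=
  ∀ X : C, ∃ (n : ℕ) (Y : Fin n → C),
    (∀ i, IsLocalRing (End (Y i))) ∧ Nonempty (X ≅ ⨁ Y)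

/-- The closure `add Ψ` of a set of objects under finite direct sums and isomorphisms. -/
def addSet {C : Type u} [Category.{v} C] [Preadditive C] [HasZeroObject C]
    [HasFiniteBiproducts C] (P : Set C) : Set C :=
  {X | ∃ (m : ℕ) (f : Fin m → C), (∀ k, f k ∈ P) ∧ Nonempty (X ≅ ⨁ f)}

/-- An indecomposable object. -/
def Indec {C : Type u} [Category.{v} C] [Preadditive C] [HasZeroObject C]
    [HasFiniteBiproducts C] (X : C) : Prop :=
  ¬ IsZero X ∧ ∀ (Y Z : C), Nonempty (X ≅ Y ⊞ Z) → IsZero Y ∨ IsZero Z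

/-- A morphism `q` is right minimal. -/
def RightMinimal {C : Type u} [Category.{v} C] {X Y : C} (q : X ⟶ Y) : Prop :=
  ∀ g : X ⟶ X, g ≫ q = q → IsIso g

/-- The extra structure making an extriangulated category into an artin `R`-linear
extriangulated category: an `R`-module structure on each `E(X, A)` for which `E` is
`R`-bilinear, with all Hom-sets and all `E(X, A)` of finite length over `R`. -/
structure ArtinLinear {C : Type u} [Category.{v} C] [Preadditive C]
    (R : Type*) [CommRing R] [CategoryTheory.Linear R C] (S : PreExt C) where
  module : ∀ X A : C, Module R (S.Ext X A)
  push_smul : ∀ {X A A' : C} (r : R) (a : A ⟶ A') (δ : S.Ext X A),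
      S.push (r • a) δ = letI := module X A'; r • S.push a δ
  pull_smul : ∀ {X' X A : C} (r : R) (c : X' ⟶ X) (δ : S.Ext X A),
      S.pull (r • c) δ = letI := module X' A; r • S.pull c δ
  homFinite : ∀ X Y : C, IsFiniteLength R (X ⟶ Y)
  extFinite : ∀ X A : C, letI := module X A; IsFiniteLength R (S.Ext X A)

/-- An `E`-stratifying system: a finite family of indecomposable objects subject to
the orthogonality axioms (S1) and (S2). -/
structure IsStratSys {C : Type u} [Category.{v} C] [Preadditive C] [HasZeroObject C]
    [HasFiniteBiproducts C] (S : PreExt C) {n : ℕ} (Φ : Fin n → C) : Prop where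
  indec : ∀ i, Indec (Φ i)
  s1 : ∀ i j : Fin n, i < j → ∀ φ : Φ j ⟶ Φ i, φ = 0
  s2 : ∀ i j : Fin n, i ≤ j → ∀ δ : S.Ext (Φ j) (Φ i), δ = 0

/-- The data of extriangles `K i → Q i → Φ i ⇢η i` with `K i ∈ F(Φ_{j>i})`, as in
axiom (PS2) of a projective `E`-stratifying system. -/
structure ProjData {C : Type u} [Category.{v} C] [Preadditive C]
    (S : PreExt C) {n : ℕ} (Φ Q : Fin n → C) where
  K : Fin n → C
  k : ∀ i, K i ⟶ Q i
  q : ∀ i, Q i ⟶ Φ i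
  η : ∀ i, S.Ext (Φ i) (K i)
  ext : ∀ i, S.IsExtriangle (k i) (q i) (η i)
  kmem : ∀ i, K i ∈ S.Filt (Φ '' {j | i < j})

/-- `(Φ, Q)` is a projective `E`-stratifying system. -/
def IsProjSS {C : Type u} [Category.{v} C] [Preadditive C] [HasZeroObject C]
    [HasFiniteBiproducts C] (S : PreExt C) {n : ℕ} (Φ Q : Fin n → C) : Prop :=
  IsStratSys S Φ ∧ (∀ i j : Fin n, ∀ δ : S.Ext (Q i) (Φ j), δ = 0) ∧
    Nonempty (ProjData S Φ Q)

/-- `(Φ, Q)` is a minimal projective `E`-stratifying system: the morphisms `q i` of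
the extriangles witnessing (PS2) may be chosen right minimal. -/
def IsMinProjSS {C : Type u} [Category.{v} C] [Preadditive C] [HasZeroObject C]
    [HasFiniteBiproducts C] (S : PreExt C) {n : ℕ} (Φ Q : Fin n → C) : Prop :=
  IsStratSys S Φ ∧ (∀ i j : Fin n, ∀ δ : S.Ext (Q i) (Φ j), δ = 0) ∧
    ∃ d : ProjData S Φ Q, ∀ i, RightMinimal (d.q i)

/-!
The composite of `g₁ ⊕ g₂` with the split deflation onto `X₂`, namely
`snd ≫ g₂ : B₁ ⊞ B₂ ⟶ X₂`, is a deflation by (ET4)ᵒᵖ. Weak idempotent completeness then lets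
one cancel the summand `B₁`: the inflation `K ⟶ B₁ ⊞ B₂` of that deflation contains `B₁` as a
direct summand `K ≅ B₁ ⊞ A₂`, and (ET4) applied to `B₁ ⟶ K ⟶ B₁ ⊞ B₂` exhibits `g₂` as the
deflation of an extriangle starting at `A₂`. Symmetrically `g₁` is a deflation, and the
direct sum of the two extriangles maps by (ET3)ᵒᵖ to the given one with identities on the last
two terms, so the first component is an isomorphism by the long exact sequences.
-/

namespace PreExt

variable {C : Type u} [Category.{v} C] [Preadditive C] {S : PreExt C}

lemma push_comp {X A A' A'' : C} (a : A ⟶ A') (b : A' ⟶ A'') (δ : S.Ext X A) :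
    S.push (a ≫ b) δ = S.push b (S.push a δ) := by
  simp [push]

@[simp]
lemma push_id {X A : C} (δ : S.Ext X A) : S.push (𝟙 A) δ = δ := by
  simp [push]

@[simp]
lemma pull_id {X A : C} (δ : S.Ext X A) : S.pull (𝟙 X) δ = δ := by
  simp [pull]

@[simp]
lemma push_zero {X A A' : C} (a : A ⟶ A') : S.push a (0 : S.Ext X A) = 0 :=
  map_zero _

@[simp]
lemma pull_zero {X' X A : C} (c : X' ⟶ X) : S.pull c (0 : S.Ext X A) = 0 :=
  map_zero _

variable [HasFiniteBiproducts C]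

namespace IsET

lemma push_zero_hom (hS : S.IsET) {X A A' : C} (δ : S.Ext X A) : S.push (0 : A ⟶ A') δ = 0 :=
  (AddMonoidHom.mk' (S.push · δ) (hS.push_add · · δ)).map_zero

lemma push_sub_hom (hS : S.IsET) {X A A' : C} (a b : A ⟶ A') (δ : S.Ext X A) :
    S.push (a - b) δ = S.push a δ - S.push b δ :=
  (AddMonoidHom.mk' (S.push · δ) (hS.push_add · · δ)).map_sub a b

end IsET

namespace IsExtriangle

variable {A B X : C} {f : A ⟶ B} {g : B ⟶ X} {δ : S.Ext X A}

lemma of_iso (hS : S.IsET) (h : S.IsExtriangle f g δ) {B' : C} (e : B ≅ B')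
    {f' : A ⟶ B'} {g' : B' ⟶ X} (hf : f ≫ e.hom = f') (hg : e.inv ≫ g = g') :
    S.IsExtriangle f' g' δ := by
  subst hf hg
  exact hS.realize_iso e h

lemma exists_lift_of_pull_eq_zero (hS : S.IsET) (h : S.IsExtriangle f g δ) {T : C}
    (c : T ⟶ X) (hc : S.pull c δ = 0) : ∃ m : T ⟶ B, m ≫ g = c := by
  obtain ⟨b, -, hb⟩ := hS.realize_map (hS.realize_zero A T) h (𝟙 A) c (by simp [hc])
  exact ⟨biprod.inr ≫ b, by rw [Category.assoc, hb, biprod.inr_snd_assoc]⟩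

lemma exists_desc_of_push_eq_zero (hS : S.IsET) (h : S.IsExtriangle f g δ) {T : C}
    (a : A ⟶ T) (ha : S.push a δ = 0) : ∃ d : B ⟶ T, f ≫ d = a := by
  obtain ⟨b, hb, -⟩ := hS.realize_map h (hS.realize_zero T X) a (𝟙 X) (by simp [ha])
  exact ⟨b ≫ biprod.fst, by rw [← Category.assoc, hb, Category.assoc, biprod.inl_fst,
    Category.comp_id]⟩

lemma exists_push_eq_of_pull_eq_zero (hS : S.IsET) (h : S.IsExtriangle f g δ) {T : C}
    (ε : S.Ext X T) (hε : S.pull g ε = 0) : ∃ a : A ⟶ T, S.push a δ = ε := by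
  obtain ⟨_, t, d, hε'⟩ := hS.realize_exists ε
  obtain ⟨m, hm⟩ := hε'.exists_lift_of_pull_eq_zero hS g hε
  obtain ⟨a, -, ha⟩ := hS.et3op h hε' m (𝟙 X) (by rw [Category.comp_id, hm])
  exact ⟨a, by rw [ha, pull_id]⟩

end IsExtriangle

lemma IsET.isExtriangle_of_isBilimit (hS : S.IsET) {X Y : C} {b : BinaryBicone X Y}
    (hb : b.IsBilimit) : S.IsExtriangle b.inl b.snd (0 : S.Ext Y X) :=
  (hS.realize_zero X Y).of_iso hS (biprod.uniqueUpToIso X Y hb).symm (by simp) (by simp)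

lemma IsET.exists_isExtriangle_of_retraction (hS : S.IsET) (hwic : WeaklyIdemComplete C)
    {X K : C} (u : X ⟶ K) (r : K ⟶ X) (hur : u ≫ r = 𝟙 X) :
    ∃ (Y : C) (π : K ⟶ Y), S.IsExtriangle u π (0 : S.Ext Y X) := by
  have : HasKernel r := hwic K X r (IsSplitEpi.mk' ⟨u, hur⟩)
  let b : BinaryBicone X (kernel r) :=
    { pt := K
      fst := r
      snd := kernel.lift r (𝟙 K - r ≫ u) (by simp [hur])
      inl := u
      inr := kernel.ι r
      inl_fst := hur
      inl_snd := by ext; simp [reassoc_of% hur]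
      inr_fst := kernel.condition r
      inr_snd := by ext; simp }
  exact ⟨kernel r, b.snd, hS.isExtriangle_of_isBilimit (isBinaryBilimitOfTotal b (by simp [b]))⟩

namespace IsDeflation

lemma comp (hS : S.IsET) {B X Y : C} {g : B ⟶ X} {g' : X ⟶ Y} (hg : S.IsDeflation g)
    (hg' : S.IsDeflation g') : S.IsDeflation (g ≫ g') := by
  obtain ⟨_, _, _, h⟩ := hg
  obtain ⟨_, _, _, h'⟩ := hg'
  obtain ⟨_, k, -, -, _, hk, -⟩ := hS.et4op h' h
  exact ⟨_, k, _, hk⟩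

lemma iso_comp (hS : S.IsET) {B B' X : C} (e : B' ≅ B) {g : B ⟶ X} (hg : S.IsDeflation g) :
    S.IsDeflation (e.hom ≫ g) := by
  obtain ⟨_, f, δ, h⟩ := hg
  exact ⟨_, f ≫ e.inv, δ, hS.realize_iso e.symm h⟩

end IsDeflation

lemma IsET.isDeflation_biprod_snd (hS : S.IsET) (X Y : C) :
    S.IsDeflation (biprod.snd : X ⊞ Y ⟶ Y) :=
  ⟨_, _, _, hS.realize_zero X Y⟩

lemma IsET.isDeflation_biprod_fst (hS : S.IsET) (X Y : C) :
    S.IsDeflation (biprod.fst : X ⊞ Y ⟶ X) := by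
  simpa using (hS.isDeflation_biprod_snd Y X).iso_comp hS (biprod.braiding X Y)

section ZeroObject

variable [HasZeroObject C]

lemma IsET.isExtriangle_zero_left (hS : S.IsET) (T : C) :
    S.IsExtriangle (0 : (0 : C) ⟶ T) (𝟙 T) 0 :=
  (hS.realize_zero 0 T).of_iso hS (isoZeroBiprod (isZero_zero C)).symm
    ((isZero_zero C).eq_of_src _ _) (by simp)

lemma IsET.isExtriangle_zero_right (hS : S.IsET) (T : C) :
    S.IsExtriangle (𝟙 T) (0 : T ⟶ 0) 0 :=
  (hS.realize_zero T 0).of_iso hS (isoBiprodZero (isZero_zero C)).symm (by simp)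
    ((isZero_zero C).eq_of_tgt _ _)

namespace IsExtriangle

variable {A B X : C} {f : A ⟶ B} {g : B ⟶ X} {δ : S.Ext X A}

lemma comp_eq_zero (hS : S.IsET) (h : S.IsExtriangle f g δ) : f ≫ g = 0 := by
  obtain ⟨b, hfb, hbg⟩ := hS.realize_map h (hS.isExtriangle_zero_left X) 0 (𝟙 X)
    (by rw [hS.push_zero_hom, pull_zero])
  rw [Category.comp_id, Category.comp_id] at hbg
  rw [← hbg, hfb, zero_comp]

lemma pull_eq_zero (hS : S.IsET) (h : S.IsExtriangle f g δ) : S.pull g δ = 0 := by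
  obtain ⟨a, -, ha⟩ := hS.et3op (hS.isExtriangle_zero_left B) h (𝟙 B) g (by simp)
  rw [← ha, push_zero]

lemma push_eq_zero (hS : S.IsET) (h : S.IsExtriangle f g δ) : S.push f δ = 0 := by
  obtain ⟨c, -, hc⟩ := hS.et3 h (hS.isExtriangle_zero_right B) f (𝟙 B) (by simp)
  rw [hc, pull_zero]

lemma exists_lift_of_comp_eq_zero (hS : S.IsET) (h : S.IsExtriangle f g δ) {T : C}
    (t : T ⟶ B) (ht : t ≫ g = 0) : ∃ u : T ⟶ A, u ≫ f = t := by
  obtain ⟨a, ha, -⟩ := hS.et3op (hS.isExtriangle_zero_right T) h t 0 (by simp [ht])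
  exact ⟨a, by simpa using ha.symm⟩

lemma exists_desc_of_comp_eq_zero (hS : S.IsET) (h : S.IsExtriangle f g δ) {T : C}
    (t : B ⟶ T) (ht : f ≫ t = 0) : ∃ d : X ⟶ T, g ≫ d = t := by
  obtain ⟨c, hc, -⟩ := hS.et3 h (hS.isExtriangle_zero_left T) 0 t (by simp [ht])
  exact ⟨c, by simpa using hc⟩

lemma isIso_of_comp_infl (hS : S.IsET) (h : S.IsExtriangle f g δ) {A' : C} {f' : A' ⟶ B}
    {δ' : S.Ext X A'} (h' : S.IsExtriangle f' g δ') (t : A ⟶ A') (ht : t ≫ f' = f)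
    (hδ : S.push t δ = δ') : IsIso t := by
  have : Epi t := Preadditive.epi_of_cancel_zero t fun φ hφ => by
    obtain ⟨χ, hχ⟩ := h'.exists_desc_of_push_eq_zero hS φ
      (by rw [← hδ, ← push_comp, hφ, hS.push_zero_hom])
    obtain ⟨ρ, hρ⟩ := h.exists_desc_of_comp_eq_zero hS χ (by rw [← ht, Category.assoc, hχ, hφ])
    rw [← hχ, ← hρ, ← Category.assoc, h'.comp_eq_zero hS, zero_comp]
  obtain ⟨ψ, hψ⟩ := h'.exists_push_eq_of_pull_eq_zero hS δ (h.pull_eq_zero hS)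
  obtain ⟨χ, hχ⟩ := h.exists_desc_of_push_eq_zero hS (𝟙 A - t ≫ ψ)
    (by rw [hS.push_sub_hom, push_comp, hδ, hψ, push_id, sub_self])
  have : IsSplitMono t := IsSplitMono.mk' ⟨ψ + f' ≫ χ, by
    rw [Preadditive.comp_add, ← Category.assoc, ht, hχ, add_sub_cancel]⟩
  exact isIso_of_epi_of_isSplitMono t

lemma exists_iso_of_inl (hS : S.IsET) {C₁ C₂ E : C} {h : C₁ ⊞ C₂ ⟶ E} {δ : S.Ext E C₁}
    (hinl : S.IsExtriangle biprod.inl h δ) : ∃ c : C₂ ≅ E, biprod.snd ≫ c.hom = h := by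
  obtain ⟨c, hc, -⟩ := hS.et3 (hS.realize_zero C₁ C₂) hinl (𝟙 C₁) (𝟙 _) (by simp)
  rw [Category.id_comp] at hc
  have : Mono c := Preadditive.mono_of_cancel_zero c fun σ hσ => by
    obtain ⟨n, hn⟩ := hinl.exists_lift_of_comp_eq_zero hS (σ ≫ biprod.inr)
      (by rw [Category.assoc, ← hc, biprod.inr_snd_assoc, hσ])
    simpa using (congrArg (· ≫ biprod.snd) hn).symm
  have hδ : δ = 0 := by
    rw [← push_id δ, ← biprod.inl_fst, push_comp, hinl.push_eq_zero hS, push_zero]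
  obtain ⟨m, hm⟩ := hinl.exists_lift_of_pull_eq_zero hS (𝟙 E) (by rw [hδ, pull_zero])
  have : IsSplitEpi c := IsSplitEpi.mk' ⟨m ≫ biprod.snd, by rw [Category.assoc, hc, hm]⟩
  have : IsIso c := isIso_of_mono_of_isSplitEpi c
  exact ⟨asIso c, hc⟩

end IsExtriangle

namespace IsDeflation

lemma of_biprod_snd_comp (hS : S.IsET) (hwic : WeaklyIdemComplete C) {C₁ C₂ X : C}
    {g : C₂ ⟶ X} (hg : S.IsDeflation (biprod.snd ≫ g : C₁ ⊞ C₂ ⟶ X)) : S.IsDeflation g := by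
  obtain ⟨K, k, ε, hk⟩ := hg
  obtain ⟨u, hu⟩ := hk.exists_lift_of_comp_eq_zero hS biprod.inl (by simp)
  obtain ⟨A₂, π, hπ⟩ := hS.exists_isExtriangle_of_retraction hwic u (k ≫ biprod.fst)
    (by rw [reassoc_of% hu, biprod.inl_fst])
  obtain ⟨E, q, d, e, _, hinl, hde, -, -, -, hhe⟩ := hS.et4 hπ hk
  rw [hu] at hinl
  obtain ⟨c, hc⟩ := hinl.exists_iso_of_inl hS
  refine ⟨A₂, d ≫ c.inv, S.push π ε, hde.of_iso hS c.symm rfl ?_⟩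
  rw [← cancel_epi (biprod.snd : C₁ ⊞ C₂ ⟶ C₂)]
  simp [reassoc_of% hc, hhe]

lemma of_biprod_fst_comp (hS : S.IsET) (hwic : WeaklyIdemComplete C) {C₁ C₂ X : C}
    {g : C₁ ⟶ X} (hg : S.IsDeflation (biprod.fst ≫ g : C₁ ⊞ C₂ ⟶ X)) : S.IsDeflation g :=
  of_biprod_snd_comp hS hwic (by simpa using hg.iso_comp hS (biprod.braiding C₂ C₁))

end IsDeflation

end ZeroObject

end PreExt

section Statements

variable {C : Type u} [Category.{v} C] [Preadditive C] [HasZeroObject C] [HasFiniteBiproducts C]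

theorem stmt2 (S : PreExt C) (hS : S.IsET) (hwic : WeaklyIdemComplete C)
    {A B₁ B₂ X₁ X₂ : C} (f : A ⟶ B₁ ⊞ B₂) (g₁ : B₁ ⟶ X₁) (g₂ : B₂ ⟶ X₂)
    (δ : S.Ext (X₁ ⊞ X₂) A) (h : S.IsExtriangle f (biprod.map g₁ g₂) δ) :
    ∃ (A₁ A₂ : C) (f₁ : A₁ ⟶ B₁) (f₂ : A₂ ⟶ B₂) (δ₁ : S.Ext X₁ A₁) (δ₂ : S.Ext X₂ A₂),
      S.IsExtriangle f₁ g₁ δ₁ ∧ S.IsExtriangle f₂ g₂ δ₂ ∧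
      S.TriIso f (biprod.map g₁ g₂) δ
        (biprod.map f₁ f₂) (biprod.map g₁ g₂) (S.sumExt δ₁ δ₂) := by
  have hg : S.IsDeflation (biprod.map g₁ g₂) := ⟨_, _, _, h⟩
  obtain ⟨A₁, f₁, δ₁, h₁⟩ : S.IsDeflation g₁ := .of_biprod_fst_comp hS hwic (C₂ := B₂)
    (by simpa using hg.comp hS (hS.isDeflation_biprod_fst X₁ X₂))
  obtain ⟨A₂, f₂, δ₂, h₂⟩ : S.IsDeflation g₂ := .of_biprod_snd_comp hS hwic (C₁ := B₁)
    (by simpa using hg.comp hS (hS.isDeflation_biprod_snd X₁ X₂))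
  have hsum := hS.realize_sum h₁ h₂
  obtain ⟨t, ht, hδt⟩ := hS.et3op h hsum (𝟙 _) (𝟙 _) (by simp)
  have : IsIso t := h.isIso_of_comp_infl hS hsum t (by simpa using ht.symm) (by simpa using hδt)
  exact ⟨A₁, A₂, f₁, f₂, δ₁, δ₂, h₁, h₂, asIso t, Iso.refl _, Iso.refl _, ht, by simp, hδt⟩

end Statements

end ExtriPaper
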